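/- arXiv:1610.07494 — 4 statements merged into one kernel-verified Lean document; each statement's English description precedes it below -/
import Mathlib

section
/- In the peculiar algebra 𝒜∂ (the path algebra of the quiver on four vertices with arrows p_i and q_i in opposite directions between consecutive vertices, modulo the relations p_i q_i = 0 = q_i p_i), the element p⁴ + q⁴ is central, where p = p₁+p₂+p₃+p₄ and q = q₁+q₂+q₃+q₄. -/
/-!
**Statement 0.** In the peculiar algebra `𝒜∂` (the path algebra over 𝔽₂ of the quiver
on four vertices with arrows `p_i : i → i − 1` and `q_i : i − 1 → i` (indices mod 4),
modulo the relations `p_i q_i = 0 = q_i p_i`), the element `p⁴ + q⁴` is central, where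
`p = p₁ + p₂ + p₃ + p₄` and `q = q₁ + q₂ + q₃ + q₄`.

The path algebra is presented as the quotient of the free 𝔽₂-algebra on generators
`ι_i, p_i, q_i` by the relations making the `ι_i` a complete system of orthogonal
idempotents with `p_i = ι_i p_i ι_{i−1}` and `q_i = ι_{i−1} q_i ι_i`, together with
`p_i q_i = 0 = q_i p_i`.
-/

namespace PeculiarAlgebra

/-- generators of the peculiar algebra `𝒜∂` -/
inductive Gen : Type
  | iota : ZMod 4 → Gen   -- the idempotents ι_i
  | p : ZMod 4 → Gen      -- p_i : path from vertex i to vertex i − 1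
  | q : ZMod 4 → Gen      -- q_i : path from vertex i − 1 to vertex i

noncomputable def g (x : Gen) : FreeAlgebra (ZMod 2) Gen := FreeAlgebra.ι (ZMod 2) x

/-- the defining relations of `𝒜∂` (multiplication is concatenation of paths,
`a * b` = "a followed by b") -/
inductive Rel : FreeAlgebra (ZMod 2) Gen → FreeAlgebra (ZMod 2) Gen → Prop
  | iota_mul (i j : ZMod 4) :
      Rel (g (.iota i) * g (.iota j)) (if i = j then g (.iota i) else 0)
  | iota_sum : Rel (∑ i : ZMod 4, g (.iota i)) 1
  | iota_p (i j : ZMod 4) :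
      Rel (g (.iota i) * g (.p j)) (if i = j then g (.p j) else 0)
  | p_iota (i j : ZMod 4) :
      Rel (g (.p j) * g (.iota i)) (if i = j - 1 then g (.p j) else 0)
  | iota_q (i j : ZMod 4) :
      Rel (g (.iota i) * g (.q j)) (if i = j - 1 then g (.q j) else 0)
  | q_iota (i j : ZMod 4) :
      Rel (g (.q j) * g (.iota i)) (if i = j then g (.q j) else 0)
  | pq (i : ZMod 4) : Rel (g (.p i) * g (.q i)) 0
  | qp (i : ZMod 4) : Rel (g (.q i) * g (.p i)) 0

/-- the peculiar algebra `𝒜∂` -/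
abbrev A := RingQuot Rel

noncomputable def ιA (i : ZMod 4) : A := RingQuot.mkRingHom Rel (g (.iota i))
noncomputable def pA (i : ZMod 4) : A := RingQuot.mkRingHom Rel (g (.p i))
noncomputable def qA (i : ZMod 4) : A := RingQuot.mkRingHom Rel (g (.q i))

/-- `p = p₁ + p₂ + p₃ + p₄` -/
noncomputable def P : A := ∑ i : ZMod 4, pA i
/-- `q = q₁ + q₂ + q₃ + q₄` -/
noncomputable def Q : A := ∑ i : ZMod 4, qA i

end PeculiarAlgebra

/-!
Since `P ι_i = p_{i+1} = ι_{i+1} P`, multiplying by `P` shifts the idempotents by one vertex, so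
`P⁴` commutes with every `ι_i` because indices live in `ℤ/4`; likewise `Q ι_i = q_i = ι_{i-1} Q`.
Inserting `1 = ∑ ι_k` gives `P Q = ∑ (P ι_k)(ι_k Q) = ∑ p_{k+1} q_{k+1} = 0` and similarly
`Q P = 0`, so `P` and `Q` commute. As `p_i = ι_i P` and `q_i = Q ι_i`, every generator of `𝒜∂`
then commutes with `P⁴ + Q⁴`.
-/

theorem semiconjBy_pow_of_shift {M G : Type*} [Monoid M] [AddMonoid G] {x : M} {e : G → M}
    {c : G} (h : ∀ i, SemiconjBy x (e i) (e (i + c))) (k : ℕ) (i : G) :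
    SemiconjBy (x ^ k) (e i) (e (i + k • c)) := by
  induction k generalizing i with
  | zero => simp
  | succ k ih =>
    rw [pow_succ, succ_nsmul', ← add_assoc]
    exact (ih (i + c)).mul_left (h i)

theorem commute_pow_of_shift {M G : Type*} [Monoid M] [AddMonoid G] {x : M} {e : G → M}
    {c : G} (h : ∀ i, SemiconjBy x (e i) (e (i + c))) {n : ℕ} (hc : n • c = 0) (i : G) :
    Commute (x ^ n) (e i) := by
  simpa [Commute, hc] using semiconjBy_pow_of_shift h n i

theorem RingQuot.mem_center_of_forall_commute_ι {R X : Type*} [CommSemiring R]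
    {r : FreeAlgebra R X → FreeAlgebra R X → Prop} {z : RingQuot r}
    (h : ∀ x, Commute (RingQuot.mkRingHom r (FreeAlgebra.ι R x)) z) :
    z ∈ Set.center (RingQuot r) := by
  have hgen :
      Algebra.adjoin R (Set.range fun x ↦ RingQuot.mkAlgHom R r (FreeAlgebra.ι R x)) = ⊤ := by
    rw [Set.range_comp' (RingQuot.mkAlgHom R r), Algebra.adjoin_image, FreeAlgebra.adjoin_range_ι,
      Algebra.map_top, AlgHom.range_eq_top]
    exact RingQuot.mkAlgHom_surjective R r
  refine Semigroup.mem_center_iff.2 fun b ↦ (Algebra.commute_of_mem_adjoin_of_forall_mem_commute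
    (hgen ▸ Algebra.mem_top : b ∈ _) ?_).eq.symm
  rintro _ ⟨x, rfl⟩
  simpa only [← RingQuot.mkAlgHom_coe R r, AlgHom.coe_toRingHom] using (h x).symm

theorem mul_eq_sum_mul_mul_of_sum_eq_one {R ι : Type*} [Semiring R] {s : Finset ι} {e : ι → R}
    (hsum : ∑ k ∈ s, e k = 1) (he : ∀ k ∈ s, IsIdempotentElem (e k)) (x y : R) :
    x * y = ∑ k ∈ s, x * e k * (e k * y) := by
  calc x * y = ∑ k ∈ s, x * e k * y := by rw [← Finset.sum_mul, ← Finset.mul_sum, hsum, mul_one]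
    _ = ∑ k ∈ s, x * e k * (e k * y) := by
      refine Finset.sum_congr rfl fun k hk ↦ ?_
      rw [← mul_assoc, mul_assoc x (e k) (e k), (he k hk).eq]

namespace PeculiarAlgebra

theorem isIdempotentElem_ιA (i : ZMod 4) : IsIdempotentElem (ιA i) := by
  simpa [IsIdempotentElem, ιA, g] using RingQuot.mkRingHom_rel (Rel.iota_mul i i)

theorem ιA_mul_pA (i j : ZMod 4) : ιA i * pA j = if i = j then pA j else 0 := by
  simpa [ιA, pA, g, apply_ite] using RingQuot.mkRingHom_rel (Rel.iota_p i j)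

theorem pA_mul_ιA (i j : ZMod 4) : pA j * ιA i = if i = j - 1 then pA j else 0 := by
  simpa [ιA, pA, g, apply_ite] using RingQuot.mkRingHom_rel (Rel.p_iota i j)

theorem ιA_mul_qA (i j : ZMod 4) : ιA i * qA j = if i = j - 1 then qA j else 0 := by
  simpa [ιA, qA, g, apply_ite] using RingQuot.mkRingHom_rel (Rel.iota_q i j)

theorem qA_mul_ιA (i j : ZMod 4) : qA j * ιA i = if i = j then qA j else 0 := by
  simpa [ιA, qA, g, apply_ite] using RingQuot.mkRingHom_rel (Rel.q_iota i j)

theorem pA_mul_qA_self (i : ZMod 4) : pA i * qA i = 0 := by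
  simpa [pA, qA, g] using RingQuot.mkRingHom_rel (Rel.pq i)

theorem qA_mul_pA_self (i : ZMod 4) : qA i * pA i = 0 := by
  simpa [pA, qA, g] using RingQuot.mkRingHom_rel (Rel.qp i)

theorem sum_ιA : ∑ i, ιA i = 1 := by
  simpa [ιA, g] using RingQuot.mkRingHom_rel Rel.iota_sum

theorem ιA_mul_P (i : ZMod 4) : ιA i * P = pA i := by
  simp [P, Finset.mul_sum, ιA_mul_pA]

theorem P_mul_ιA (i : ZMod 4) : P * ιA i = pA (i + 1) := by
  simp [P, Finset.sum_mul, pA_mul_ιA, eq_sub_iff_add_eq]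

theorem ιA_mul_Q (i : ZMod 4) : ιA i * Q = qA (i + 1) := by
  simp [Q, Finset.mul_sum, ιA_mul_qA, eq_sub_iff_add_eq]

theorem Q_mul_ιA (i : ZMod 4) : Q * ιA i = qA i := by
  simp [Q, Finset.sum_mul, qA_mul_ιA]

theorem P_mul_Q : P * Q = 0 := by
  rw [mul_eq_sum_mul_mul_of_sum_eq_one sum_ιA fun k _ ↦ isIdempotentElem_ιA k]
  simp [P_mul_ιA, ιA_mul_Q, pA_mul_qA_self]

theorem Q_mul_P : Q * P = 0 := by
  rw [mul_eq_sum_mul_mul_of_sum_eq_one sum_ιA fun k _ ↦ isIdempotentElem_ιA k]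
  simp [Q_mul_ιA, ιA_mul_P, qA_mul_pA_self]

theorem commute_P_Q : Commute P Q :=
  P_mul_Q.trans Q_mul_P.symm

theorem commute_P_pow_four_ιA (i : ZMod 4) : Commute (P ^ 4) (ιA i) :=
  commute_pow_of_shift (c := 1) (fun i ↦ by simp [SemiconjBy, P_mul_ιA, ιA_mul_P]) (by decide) i

theorem commute_Q_pow_four_ιA (i : ZMod 4) : Commute (Q ^ 4) (ιA i) :=
  commute_pow_of_shift (c := -1) (fun i ↦ by simp [SemiconjBy, Q_mul_ιA, ιA_mul_Q]) (by decide) i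

end PeculiarAlgebra

open PeculiarAlgebra in
/-- `p⁴ + q⁴` is central in the peculiar algebra `𝒜∂`. -/
theorem stmt0 : (P ^ 4 + Q ^ 4) ∈ Set.center A := by
  have hι (i : ZMod 4) : Commute (ιA i) (P ^ 4 + Q ^ 4) :=
    ((commute_P_pow_four_ιA i).add_left (commute_Q_pow_four_ιA i)).symm
  have hP : Commute P (P ^ 4 + Q ^ 4) := (Commute.self_pow P 4).add_right (commute_P_Q.pow_right 4)
  have hQ : Commute Q (P ^ 4 + Q ^ 4) :=
    (commute_P_Q.symm.pow_right 4).add_right (Commute.self_pow Q 4)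
  have hp (i : ZMod 4) : Commute (pA i) (P ^ 4 + Q ^ 4) := ιA_mul_P i ▸ (hι i).mul_left hP
  have hq (i : ZMod 4) : Commute (qA i) (P ^ 4 + Q ^ 4) := Q_mul_ιA i ▸ hQ.mul_left (hι i)
  refine RingQuot.mem_center_of_forall_commute_ι fun x ↦ ?_
  cases x with
  | iota i => exact hι i
  | p i => exact hp i
  | q i => exact hq i
end

section
/- Let M be a finitely generated curved type D structure over the peculiar algebra 𝒜∂ with curvature p⁴ + q⁴, equipped with a homological ℤ-grading such that the structure map δ: M → 𝒜∂ ⊗ M decreases the homological grading by 1 (where the grading of a ⊗ m is h(a) + h(m)). Then M splits as a direct sum M₀ ⊕ M₁ such that the component of δ mapping M₀ into 𝒜∂ ⊗ M₀ and the component mapping M₁ into 𝒜∂ ⊗ M₁ both vanish. -/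
/-!
**Statement 2.** Let `M` be a finitely generated curved type D structure over the
peculiar algebra `𝒜∂` with curvature `p⁴ + q⁴`, equipped with a homological
ℤ-grading such that the structure map `δ : M → 𝒜∂ ⊗ M` decreases the homological
grading by 1 (where the grading of `a ⊗ m` is `h(a) + h(m)`).  Then `M` splits as a
direct sum `M₀ ⊕ M₁` such that the component of `δ` mapping `M₀` into `𝒜∂ ⊗ M₀` and
the component mapping `M₁` into `𝒜∂ ⊗ M₁` both vanish.

The peculiar algebra is the path algebra of the paper, presented by generators and
relations.  Its homological grading is encoded as an internal ℤ-grading `𝒜` with the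
idempotents in degree 0 and `p_i, q_i` in degree `0` or `−1` according to a fixed
orientation `ε` of the four punctures (two "out", two "in").  The type D structure
`M` carries a joint decomposition `P'` by homological degree and by idempotent, and
`δ` is ℐ-linear and decreases the homological degree by exactly 1.
-/

namespace PeculiarAlgebra

/-- the curvature `a_c = p⁴ + q⁴` -/
noncomputable def acurv : A := P ^ 4 + Q ^ 4

/-- the subspace `ι_i · 𝒜∂ · ι_j` -/
noncomputable def idemPart (i j : ZMod 4) : Submodule (ZMod 2) A where
  carrier := {x | ιA i * x * ιA j = x}
  add_mem' := by
    intro x y hx hy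
    simp only [Set.mem_setOf_eq] at *
    rw [mul_add, add_mul, hx, hy]
  zero_mem' := by simp
  smul_mem' := by
    intro c x hx
    simp only [Set.mem_setOf_eq] at *
    rw [Algebra.mul_smul_comm, Algebra.smul_mul_assoc, hx]

open TensorProduct in
/-- the subspace of `𝒜∂ ⊗ M` spanned by `U ⊗ W` -/
noncomputable def tensorSpan (U : Submodule (ZMod 2) A) {M : Type*} [AddCommGroup M]
    [Module (ZMod 2) M] (W : Submodule (ZMod 2) M) :
    Submodule (ZMod 2) (TensorProduct (ZMod 2) A M) :=
  Submodule.span (ZMod 2) {z | ∃ u ∈ U, ∃ w ∈ W, z = u ⊗ₜ[ZMod 2] w}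

end PeculiarAlgebra

/-!
Choose `F : ℤ/4 → ℤ/2` with `F m + F (m - 1) ≡ h(p_m) = h(q_m) (mod 2)`; such an `F` exists
because exactly two punctures are "in", so the degrees of the four `p_m` sum to an even number.
Then every path from `i` to `j` has degree `≡ F i + F j`, and a summand `a ⊗ y` of `δ x` with
`x` of degree `n` at idempotent `i` and `y` of degree `n - 1 - h(a)` at idempotent `j` satisfies
`(n - 1 - h(a)) + F j ≡ n + F i + 1`. So the parity of `n + F i` splits `M` into two summands,
each of which `δ` maps into the other.
-/

section ParityPart

variable {R A : Type*} [CommSemiring R] [Semiring A] [Algebra R A]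

def parityPart (𝒜 : ℤ → Submodule R A) (c : ZMod 2) : Submodule R A :=
  ⨆ k ∈ {k : ℤ | (k : ZMod 2) = c}, 𝒜 k

variable {𝒜 : ℤ → Submodule R A}

theorem le_parityPart {k : ℤ} {c : ZMod 2} (hk : (k : ZMod 2) = c) : 𝒜 k ≤ parityPart 𝒜 c :=
  le_biSup 𝒜 hk

theorem parityPart_mul_le (h𝒜mul : ∀ i j : ℤ, ∀ x ∈ 𝒜 i, ∀ y ∈ 𝒜 j, x * y ∈ 𝒜 (i + j))
    (c d : ZMod 2) : parityPart 𝒜 c * parityPart 𝒜 d ≤ parityPart 𝒜 (c + d) := by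
  simp only [parityPart, Submodule.iSup_mul, Submodule.mul_iSup]
  refine iSup₂_le fun l hl => iSup₂_le fun k hk => Submodule.mul_le.mpr fun x hx y hy => ?_
  exact le_parityPart (by push_cast; rw [hk, hl]) (h𝒜mul k l x hx y hy)

theorem disjoint_parityPart (h𝒜 : iSupIndep 𝒜) {k : ℤ} {c : ZMod 2} (hk : (k : ZMod 2) ≠ c) :
    Disjoint (𝒜 k) (parityPart 𝒜 c) :=
  h𝒜.disjoint_biSup hk

end ParityPart

theorem isCompl_biSup_of_isInternal {ι R M : Type*} [DecidableEq ι] [Ring R] [AddCommGroup M]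
    [Module R M] {P : ι → Submodule R M} (hP : DirectSum.IsInternal P) {s t : Set ι}
    (hst : IsCompl s t) :
    IsCompl (⨆ i ∈ s, P i) (⨆ i ∈ t, P i) := by
  refine ⟨hP.submodule_iSupIndep.disjoint_biSup_biSup hst.disjoint, codisjoint_iff.mpr ?_⟩
  rw [← iSup_union, show s ∪ t = Set.univ from hst.sup_eq_top, iSup_univ,
    hP.submodule_iSup_eq_top]

theorem isCompl_setOf_eq_zero_setOf_eq_one {X : Type*} (f : X → ZMod 2) :
    IsCompl {x | f x = 0} {x | f x = 1} := by
  have : {x | f x = 1} = {x | f x = 0}ᶜ := by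
    ext x
    simp only [Set.mem_setOf_eq, Set.mem_compl_iff]
    generalize f x = a
    revert a
    decide
  rw [this]
  exact isCompl_compl

namespace PeculiarAlgebra

theorem ιA_mul_ιA (i j : ZMod 4) : ιA i * ιA j = if i = j then ιA i else 0 := by
  simpa only [ιA, map_mul, apply_ite (RingQuot.mkRingHom Rel), map_zero] using
    RingQuot.mkRingHom_rel (Rel.iota_mul i j)

theorem exists_parity_potential (ε : ZMod 4 → Bool)
    (hε : (Finset.univ.filter fun i => ε i = true).card = 2) :
    ∃ F : ZMod 4 → ZMod 2, ∀ m, ((if ε m then 0 else -1 : ℤ) : ZMod 2) = F m + F (m - 1) := by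
  refine ⟨fun m => ((Finset.univ.filter fun k : ZMod 4 =>
    0 < k.val ∧ k.val ≤ m.val ∧ ε k = false).card : ZMod 2), ?_⟩
  revert ε
  decide

theorem mkAlgHom_ι (x : Gen) :
    RingQuot.mkAlgHom (ZMod 2) Rel (FreeAlgebra.ι (ZMod 2) x) = RingQuot.mkRingHom Rel (g x) := by
  rw [← RingQuot.mkAlgHom_coe (ZMod 2) Rel]
  rfl

section Parity

variable {𝒜 : ℤ → Submodule (ZMod 2) A} {d : ZMod 4 → ℤ} {F : ZMod 4 → ZMod 2}

theorem ιA_mul_ιA_mem_parityPart (hι : ∀ i, ιA i ∈ 𝒜 0) (i j : ZMod 4) :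
    ιA i * ιA j ∈ parityPart 𝒜 (F i + F j) := by
  rw [ιA_mul_ιA]
  split_ifs with hij
  · subst hij
    exact le_parityPart (by simp [CharTwo.add_self_eq_zero]) (hι i)
  · exact zero_mem _

theorem ιA_mul_mul_ιA_mem_parityPart
    (h𝒜mul : ∀ i j : ℤ, ∀ x ∈ 𝒜 i, ∀ y ∈ 𝒜 j, x * y ∈ 𝒜 (i + j))
    (hι : ∀ i, ιA i ∈ 𝒜 0) (hp : ∀ m, pA m ∈ 𝒜 (d m)) (hq : ∀ m, qA m ∈ 𝒜 (d m))
    (hF : ∀ m, (d m : ZMod 2) = F m + F (m - 1)) (x : A) (i j : ZMod 4) :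
    ιA i * x * ιA j ∈ parityPart 𝒜 (F i + F j) := by
  obtain ⟨x, rfl⟩ := RingQuot.mkAlgHom_surjective (ZMod 2) Rel x
  induction x generalizing i j with
  | grade0 r =>
    rw [AlgHom.commutes, ← Algebra.commutes, mul_assoc, ← Algebra.smul_def]
    exact Submodule.smul_mem _ r (ιA_mul_ιA_mem_parityPart hι i j)
  | grade1 x =>
    rw [mkAlgHom_ι]
    cases x with
    | iota m =>
      show ιA i * ιA m * ιA j ∈ parityPart 𝒜 (F i + F j)
      rw [ιA_mul_ιA, ite_mul, zero_mul]
      split_ifs with him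
      · subst him
        exact ιA_mul_ιA_mem_parityPart hι i j
      · exact zero_mem _
    | p m =>
      show ιA i * pA m * ιA j ∈ parityPart 𝒜 (F i + F j)
      rw [ιA_mul_pA, ite_mul, zero_mul, pA_mul_ιA]
      split_ifs with him hjm
      · subst him hjm
        exact le_parityPart (hF i) (hp i)
      all_goals exact zero_mem _
    | q m =>
      show ιA i * qA m * ιA j ∈ parityPart 𝒜 (F i + F j)
      rw [ιA_mul_qA, ite_mul, zero_mul, qA_mul_ιA]
      split_ifs with him hjm
      · subst him hjm
        exact le_parityPart ((hF j).trans (add_comm _ _)) (hq j)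
      all_goals exact zero_mem _
  | mul a b ha hb =>
    set a' := RingQuot.mkAlgHom (ZMod 2) Rel a
    set b' := RingQuot.mkAlgHom (ZMod 2) Rel b
    have hsplit : ιA i * (a' * b') * ιA j = ∑ m, (ιA i * a' * ιA m) * (ιA m * b' * ιA j) := by
      calc ιA i * (a' * b') * ιA j = ιA i * a' * (∑ m, ιA m * ιA m) * b' * ιA j := by
            simp only [ιA_mul_ιA, if_true, sum_ιA, mul_one, mul_assoc]
        _ = _ := by simp only [Finset.mul_sum, Finset.sum_mul, mul_assoc]
    rw [map_mul, hsplit]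
    refine Submodule.sum_mem _ fun m _ => ?_
    have hparity : F i + F m + (F m + F j) = F i + F j := by grind
    exact hparity ▸ parityPart_mul_le h𝒜mul _ _ (Submodule.mul_mem_mul (ha i m) (hb m j))
  | add a b ha hb =>
    rw [map_add, mul_add, add_mul]
    exact add_mem (ha i j) (hb i j)

theorem idemPart_le_parityPart
    (h𝒜mul : ∀ i j : ℤ, ∀ x ∈ 𝒜 i, ∀ y ∈ 𝒜 j, x * y ∈ 𝒜 (i + j))
    (hι : ∀ i, ιA i ∈ 𝒜 0) (hp : ∀ m, pA m ∈ 𝒜 (d m)) (hq : ∀ m, qA m ∈ 𝒜 (d m))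
    (hF : ∀ m, (d m : ZMod 2) = F m + F (m - 1)) (i j : ZMod 4) :
    idemPart i j ≤ parityPart 𝒜 (F i + F j) := fun x hx =>
  (hx : ιA i * x * ιA j = x) ▸ ιA_mul_mul_ιA_mem_parityPart h𝒜mul hι hp hq hF x i j

end Parity

section TypeD

variable {M : Type*} [AddCommGroup M] [Module (ZMod 2) M]

theorem tensorSpan_mono {U U' : Submodule (ZMod 2) A} {W W' : Submodule (ZMod 2) M}
    (hU : U ≤ U') (hW : W ≤ W') : tensorSpan U W ≤ tensorSpan U' W' :=
  Submodule.span_mono fun _ ⟨u, hu, w, hw, h⟩ => ⟨u, hU hu, w, hW hw, h⟩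

theorem tensorSpan_bot_left (W : Submodule (ZMod 2) M) : tensorSpan ⊥ W = ⊥ := by
  refine eq_bot_iff.mpr (Submodule.span_le.mpr ?_)
  rintro _ ⟨u, hu, w, -, rfl⟩
  rw [(Submodule.mem_bot _).mp hu, TensorProduct.zero_tmul]
  exact zero_mem _

def twistedParityPart (P' : ℤ × ZMod 4 → Submodule (ZMod 2) M) (F : ZMod 4 → ZMod 2)
    (b : ZMod 2) : Submodule (ZMod 2) M :=
  ⨆ c ∈ {c : ℤ × ZMod 4 | (c.1 : ZMod 2) + F c.2 = b}, P' c

theorem isCompl_twistedParityPart {P' : ℤ × ZMod 4 → Submodule (ZMod 2) M}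
    (hP' : DirectSum.IsInternal P') (F : ZMod 4 → ZMod 2) :
    IsCompl (twistedParityPart P' F 0) (twistedParityPart P' F 1) :=
  isCompl_biSup_of_isInternal hP' (isCompl_setOf_eq_zero_setOf_eq_one _)

theorem twistedParityPart_le_comap {𝒜 : ℤ → Submodule (ZMod 2) A} (h𝒜 : iSupIndep 𝒜)
    {F : ZMod 4 → ZMod 2} (hidem : ∀ i j, idemPart i j ≤ parityPart 𝒜 (F i + F j))
    (P' : ℤ × ZMod 4 → Submodule (ZMod 2) M) (δ : M →ₗ[ZMod 2] TensorProduct (ZMod 2) A M)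
    (hδ : ∀ (n : ℤ) (i : ZMod 4), ∀ x ∈ P' (n, i),
        δ x ∈ ⨆ (k : ℤ) (j : ZMod 4), tensorSpan (𝒜 k ⊓ idemPart i j) (P' (n - 1 - k, j)))
    (b : ZMod 2) :
    twistedParityPart P' F b ≤ (tensorSpan ⊤ (twistedParityPart P' F (b + 1))).comap δ := by
  refine iSup₂_le fun ⟨n, i⟩ hni x hx => ?_
  change (n : ZMod 2) + F i = b at hni
  refine (iSup₂_le fun k j => ?_ : _ ≤ tensorSpan ⊤ (twistedParityPart P' F (b + 1)))
    (hδ n i x hx)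
  by_cases hk : (k : ZMod 2) = F i + F j
  · refine tensorSpan_mono le_top (le_biSup _ ?_)
    show ((n - 1 - k : ℤ) : ZMod 2) + F j = b + 1
    push_cast
    grind
  · rw [((disjoint_parityPart h𝒜 hk).mono_right (hidem i j)).eq_bot, tensorSpan_bot_left]
    exact bot_le

end TypeD

end PeculiarAlgebra

open PeculiarAlgebra in
theorem stmt2_general
    {M : Type*} [AddCommGroup M] [Module (ZMod 2) M]
    -- the homological grading of 𝒜∂, as an internal ℤ-grading:
    (𝒜 : ℤ → Submodule (ZMod 2) A)
    (h𝒜 : DirectSum.IsInternal 𝒜)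
    (h𝒜mul : ∀ i j : ℤ, ∀ x ∈ 𝒜 i, ∀ y ∈ 𝒜 j, x * y ∈ 𝒜 (i + j))
    -- a fixed orientation of the four punctures (two "out", two "in"):
    (ε : ZMod 4 → Bool)
    (hε : (Finset.univ.filter fun i => ε i = true).card = 2)
    (hι : ∀ i, ιA i ∈ 𝒜 0)
    (hp : ∀ i, pA i ∈ 𝒜 (if ε i then 0 else -1))
    (hq : ∀ i, qA i ∈ 𝒜 (if ε i then 0 else -1))
    -- the joint decomposition of M by homological degree and idempotent:
    (P' : ℤ × ZMod 4 → Submodule (ZMod 2) M)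
    (hP' : DirectSum.IsInternal P')
    (δ : M →ₗ[ZMod 2] TensorProduct (ZMod 2) A M)
    -- δ is ℐ-linear and decreases the homological grading by exactly 1:
    (hδ : ∀ (n : ℤ) (i : ZMod 4), ∀ x ∈ P' (n, i),
        δ x ∈ ⨆ (k : ℤ) (j : ZMod 4),
          tensorSpan (𝒜 k ⊓ idemPart i j) (P' (n - 1 - k, j))) :
    -- M splits as M₀ ⊕ M₁ with vanishing diagonal components of δ:
    ∃ M₀ M₁ : Submodule (ZMod 2) M, IsCompl M₀ M₁ ∧
      (∀ x ∈ M₀, δ x ∈ tensorSpan ⊤ M₁) ∧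
      (∀ x ∈ M₁, δ x ∈ tensorSpan ⊤ M₀) := by
  obtain ⟨F, hF⟩ := exists_parity_potential ε hε
  have hidem := idemPart_le_parityPart h𝒜mul hι hp hq hF
  have hshift := twistedParityPart_le_comap h𝒜.submodule_iSupIndep hidem P' δ hδ
  exact ⟨twistedParityPart P' F 0, twistedParityPart P' F 1, isCompl_twistedParityPart hP' F,
    hshift 0, hshift 1⟩

open PeculiarAlgebra in
theorem stmt2
    {M : Type*} [AddCommGroup M] [Module (ZMod 2) M] [Module.Finite (ZMod 2) M]
    -- the homological grading of 𝒜∂, as an internal ℤ-grading: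
    (𝒜 : ℤ → Submodule (ZMod 2) A)
    (h𝒜 : DirectSum.IsInternal 𝒜)
    (h𝒜mul : ∀ i j : ℤ, ∀ x ∈ 𝒜 i, ∀ y ∈ 𝒜 j, x * y ∈ 𝒜 (i + j))
    -- a fixed orientation of the four punctures (two "out", two "in"):
    (ε : ZMod 4 → Bool)
    (hε : (Finset.univ.filter fun i => ε i = true).card = 2)
    (hι : ∀ i, ιA i ∈ 𝒜 0)
    (hp : ∀ i, pA i ∈ 𝒜 (if ε i then 0 else -1))
    (hq : ∀ i, qA i ∈ 𝒜 (if ε i then 0 else -1))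
    -- the joint decomposition of M by homological degree and idempotent:
    (P' : ℤ × ZMod 4 → Submodule (ZMod 2) M)
    (hP' : DirectSum.IsInternal P')
    (δ : M →ₗ[ZMod 2] TensorProduct (ZMod 2) A M)
    -- δ is ℐ-linear and decreases the homological grading by exactly 1:
    (hδ : ∀ (n : ℤ) (i : ZMod 4), ∀ x ∈ P' (n, i),
        δ x ∈ ⨆ (k : ℤ) (j : ZMod 4),
          tensorSpan (𝒜 k ⊓ idemPart i j) (P' (n - 1 - k, j)))
    -- δ² is the curvature p⁴ + q⁴:
    (hcurv : (LinearMap.rTensor M (LinearMap.mul' (ZMod 2) A)) ∘ₗ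
        (TensorProduct.assoc (ZMod 2) A A M).symm.toLinearMap ∘ₗ
        (LinearMap.lTensor A δ) ∘ₗ δ = TensorProduct.mk (ZMod 2) A M acurv) :
    -- M splits as M₀ ⊕ M₁ with vanishing diagonal components of δ:
    ∃ M₀ M₁ : Submodule (ZMod 2) M, IsCompl M₀ M₁ ∧
      (∀ x ∈ M₀, δ x ∈ tensorSpan ⊤ M₁) ∧
      (∀ x ∈ M₁, δ x ∈ tensorSpan ⊤ M₀) :=
  stmt2_general 𝒜 h𝒜 h𝒜mul ε hε hι hp hq P' hP' δ hδ
end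

section
/- Clean-up Lemma: Let (O, d_O) be an object in a category of complexes 𝔠𝔵*(𝒞) over a differential graded category 𝒞, and let h ∈ Mor₀((O,d_O),(O,d_O)) be a morphism such that h² = 0, h·D(h) = 0 and D(h)·h = 0, where D(h) = d_O∘h + h∘d_O + ∂(h). Then (O, d_O + D(h)) is again an object of 𝔠𝔵*(𝒞) and is chain homotopy equivalent to (O, d_O); explicitly, (1+h) in both directions gives mutually inverse chain isomorphisms. -/
/-!
**Statement 4 (Clean-up Lemma).** Let `(O, d)` be an object in a category of complexes
`𝔠𝔵*(𝒞)` over a differential graded category `𝒞` (so `d∘d + ∂d = κ` for the fixed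
central value `κ = *`), and let `h` be a degree-0 endomorphism of `(O,d)` with
`h² = 0`, `h·D(h) = 0` and `D(h)·h = 0`, where `D(h) = d∘h + h∘d + ∂h`.  Then
`(O, d + D(h))` is again an object of `𝔠𝔵*(𝒞)` and is chain homotopy equivalent to
`(O, d)`; explicitly, `1 + h` in both directions gives mutually inverse chain
isomorphisms.

We use an (ungraded, 𝔽₂-linear) model of a dg category: hom-sets are 𝔽₂-vector
spaces, composition `comp f g` ("f followed by g") is biadditive and associative, and
the hom-differential `del` squares to zero and satisfies the Leibniz rule.
-/

/-- An (ungraded model of a) differential graded category over 𝔽₂. -/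
structure DGCat where
  Obj : Type u
  Hom : Obj → Obj → Type v
  [homAdd : ∀ X Y : Obj, AddCommGroup (Hom X Y)]
  /-- composition, `comp f g` = "first f, then g" -/
  comp : ∀ {X Y Z : Obj}, Hom X Y → Hom Y Z → Hom X Z
  id : ∀ X : Obj, Hom X X
  /-- the differential `∂` on morphism spaces -/
  del : ∀ {X Y : Obj}, Hom X Y → Hom X Y
  add_comp : ∀ {X Y Z : Obj} (f f' : Hom X Y) (g : Hom Y Z),
      comp (f + f') g = comp f g + comp f' g
  comp_add : ∀ {X Y Z : Obj} (f : Hom X Y) (g g' : Hom Y Z),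
      comp f (g + g') = comp f g + comp f g'
  comp_assoc : ∀ {W X Y Z : Obj} (f : Hom W X) (g : Hom X Y) (h : Hom Y Z),
      comp (comp f g) h = comp f (comp g h)
  id_comp : ∀ {X Y : Obj} (f : Hom X Y), comp (id X) f = f
  comp_id : ∀ {X Y : Obj} (f : Hom X Y), comp f (id Y) = f
  del_add : ∀ {X Y : Obj} (f f' : Hom X Y), del (f + f') = del f + del f'
  del_del : ∀ {X Y : Obj} (f : Hom X Y), del (del f) = 0
  /-- the Leibniz rule (over 𝔽₂, so no signs) -/
  leibniz : ∀ {X Y Z : Obj} (f : Hom X Y) (g : Hom Y Z),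
      del (comp f g) = comp (del f) g + comp f (del g)
  /-- 𝔽₂-linearity -/
  char2 : ∀ {X Y : Obj} (f : Hom X Y), f + f = 0

attribute [instance] DGCat.homAdd

namespace Stmt4

variable (𝒞 : DGCat)

/-- the differential `D(f) = d_Y ∘ f + f ∘ d_X + ∂f` on morphisms
`f : (X, dX) → (Y, dY)` of (pre)complexes -/
def DD {X Y : 𝒞.Obj} (dX : 𝒞.Hom X X) (dY : 𝒞.Hom Y Y) (f : 𝒞.Hom X Y) : 𝒞.Hom X Y :=
  𝒞.comp f dY + 𝒞.comp dX f + 𝒞.del f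

end Stmt4

/-!
Over `𝔽₂` the twisted differential `D f = f d + d f + ∂f` on endomorphisms of `(O, d)` satisfies
the Leibniz rule and `D² f = f κ + κ f`, so `D² h = 0` as `h` commutes with the curvature
`κ = d d + ∂d`. For `e = D h` the Leibniz rule gives `e e = D (h e) + h D e = 0`, hence `d + e`
has curvature `κ + D e + e e = κ`. Twisting one side of `D` by `e` adds `(1 + h) e` or
`e (1 + h)` to `D (1 + h) = e`, leaving `h e = 0` resp. `e h = 0`; finally `(1 + h)² = 1 + h² = 1`.
-/

section TwistedDifferential

variable {R : Type*} [Ring R] (δ : R →+ R)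

def twistedDiff (x y f : R) : R := f * y + x * f + δ f

def curvature (x : R) : R := x * x + δ x

variable {δ}

theorem map_one_eq_zero_of_leibniz (hδ : ∀ f g, δ (f * g) = δ f * g + f * δ g)
    (hchar : ∀ r : R, r + r = 0) : δ 1 = 0 := by
  simpa [hchar] using hδ 1 1

theorem twistedDiff_self_one (hδ : ∀ f g, δ (f * g) = δ f * g + f * δ g)
    (hchar : ∀ r : R, r + r = 0) (x : R) : twistedDiff δ x x 1 = 0 := by
  simp [twistedDiff, map_one_eq_zero_of_leibniz hδ hchar, hchar]

theorem twistedDiff_add (x y f g : R) :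
    twistedDiff δ x y (f + g) = twistedDiff δ x y f + twistedDiff δ x y g := by
  simp only [twistedDiff, mul_add, add_mul, map_add]; abel

theorem twistedDiff_add_right (x y e f : R) :
    twistedDiff δ x (y + e) f = twistedDiff δ x y f + f * e := by
  simp only [twistedDiff, mul_add]; abel

theorem twistedDiff_add_left (x y e f : R) :
    twistedDiff δ (x + e) y f = twistedDiff δ x y f + e * f := by
  simp only [twistedDiff, add_mul]; abel

theorem twistedDiff_self_mul (hδ : ∀ f g, δ (f * g) = δ f * g + f * δ g)
    (hchar : ∀ r : R, r + r = 0) (x f g : R) :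
    twistedDiff δ x x (f * g) = twistedDiff δ x x f * g + f * twistedDiff δ x x g := by
  have expand : twistedDiff δ x x f * g + f * twistedDiff δ x x g
      = twistedDiff δ x x (f * g) + (f * x * g + f * x * g) := by
    simp only [twistedDiff, hδ]; noncomm_ring
  rw [expand, hchar, add_zero]

theorem twistedDiff_self_twistedDiff_self (hδ : ∀ f g, δ (f * g) = δ f * g + f * δ g)
    (hδδ : ∀ f, δ (δ f) = 0) (hchar : ∀ r : R, r + r = 0) (x f : R) :
    twistedDiff δ x x (twistedDiff δ x x f) = f * curvature δ x + curvature δ x * f := by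
  set t := x * f * x + δ f * x + x * δ f
  calc twistedDiff δ x x (twistedDiff δ x x f)
      = f * curvature δ x + curvature δ x * f + (t + t) := by
        simp only [twistedDiff, curvature, t, map_add, hδ, hδδ]; noncomm_ring
    _ = _ := by rw [hchar, add_zero]

theorem curvature_add (x e : R) :
    curvature δ (x + e) = curvature δ x + twistedDiff δ x x e + e * e := by
  simp only [curvature, twistedDiff, mul_add, add_mul, map_add]; abel

theorem twistedDiff_self_twistedDiff_self_eq_zero (hδ : ∀ f g, δ (f * g) = δ f * g + f * δ g)
    (hδδ : ∀ f, δ (δ f) = 0) (hchar : ∀ r : R, r + r = 0) {x h : R}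
    (hcomm : Commute h (curvature δ x)) : twistedDiff δ x x (twistedDiff δ x x h) = 0 := by
  rw [twistedDiff_self_twistedDiff_self hδ hδδ hchar, hcomm.eq, hchar]

theorem twistedDiff_mul_twistedDiff_eq_zero (hδ : ∀ f g, δ (f * g) = δ f * g + f * δ g)
    (hchar : ∀ r : R, r + r = 0) {x h : R}
    (hDDh : twistedDiff δ x x (twistedDiff δ x x h) = 0)
    (hhDh : h * twistedDiff δ x x h = 0) :
    twistedDiff δ x x h * twistedDiff δ x x h = 0 := by
  have key := twistedDiff_self_mul hδ hchar x h (twistedDiff δ x x h)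
  rw [hhDh, hDDh, mul_zero, add_zero] at key
  rw [← key]
  simp [twistedDiff]

theorem curvature_add_twistedDiff {x h : R}
    (hDDh : twistedDiff δ x x (twistedDiff δ x x h) = 0)
    (hDhDh : twistedDiff δ x x h * twistedDiff δ x x h = 0) :
    curvature δ (x + twistedDiff δ x x h) = curvature δ x := by
  rw [curvature_add, hDDh, hDhDh, add_zero, add_zero]

theorem twistedDiff_one_add_eq_zero_right (hδ : ∀ f g, δ (f * g) = δ f * g + f * δ g)
    (hchar : ∀ r : R, r + r = 0) {x h : R} (hhDh : h * twistedDiff δ x x h = 0) :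
    twistedDiff δ x (x + twistedDiff δ x x h) (1 + h) = 0 := by
  rw [twistedDiff_add_right, twistedDiff_add, twistedDiff_self_one hδ hchar, add_mul, one_mul,
    hhDh, zero_add, add_zero, hchar]

theorem twistedDiff_one_add_eq_zero_left (hδ : ∀ f g, δ (f * g) = δ f * g + f * δ g)
    (hchar : ∀ r : R, r + r = 0) {x h : R} (hDhh : twistedDiff δ x x h * h = 0) :
    twistedDiff δ (x + twistedDiff δ x x h) x (1 + h) = 0 := by
  rw [twistedDiff_add_left, twistedDiff_add, twistedDiff_self_one hδ hchar, mul_add, mul_one,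
    hDhh, zero_add, add_zero, hchar]

end TwistedDifferential

theorem one_add_mul_self_eq_one {R : Type*} [Ring R] (hchar : ∀ r : R, r + r = 0) {h : R}
    (hsq : h * h = 0) : (1 + h) * (1 + h) = 1 := by
  have expand : (1 + h) * (1 + h) = 1 + (h + h) + h * h := by noncomm_ring
  rw [expand, hchar, hsq, add_zero, add_zero]

namespace DGCat

variable (𝒞 : DGCat)

theorem zero_comp {X Y Z : 𝒞.Obj} (g : 𝒞.Hom Y Z) : 𝒞.comp (0 : 𝒞.Hom X Y) g = 0 := by
  simpa using 𝒞.add_comp (0 : 𝒞.Hom X Y) 0 g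

theorem comp_zero {X Y Z : 𝒞.Obj} (f : 𝒞.Hom X Y) : 𝒞.comp f (0 : 𝒞.Hom Y Z) = 0 := by
  simpa using 𝒞.comp_add f (0 : 𝒞.Hom Y Z) 0

/-- Multiplication is diagrammatic composition: `f * g = 𝒞.comp f g`. -/
abbrev endRing (O : 𝒞.Obj) : Ring (𝒞.Hom O O) :=
  { (inferInstance : AddCommGroup (𝒞.Hom O O)) with
    mul := 𝒞.comp
    one := 𝒞.id O
    left_distrib := 𝒞.comp_add
    right_distrib := 𝒞.add_comp
    zero_mul := 𝒞.zero_comp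
    mul_zero := 𝒞.comp_zero
    mul_assoc := 𝒞.comp_assoc
    one_mul := 𝒞.id_comp
    mul_one := 𝒞.comp_id }

def delHom {X Y : 𝒞.Obj} : 𝒞.Hom X Y →+ 𝒞.Hom X Y := AddMonoidHom.mk' 𝒞.del 𝒞.del_add

end DGCat

open Stmt4 in
theorem stmt4_general (𝒞 : DGCat) (O : 𝒞.Obj) (d κ h : 𝒞.Hom O O)
    -- `κ` is the fixed central value `*` of the category of complexes `𝔠𝔵*(𝒞)`:
    (hκh : 𝒞.comp h κ = 𝒞.comp κ h)
    -- `(O, d)` is an object of `𝔠𝔵*(𝒞)`: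
    (hobj : 𝒞.comp d d + 𝒞.del d = κ)
    -- the hypotheses on `h`:
    (hsq : 𝒞.comp h h = 0)
    (hhD : 𝒞.comp (DD 𝒞 d d h) h = 0)   -- h ∘ D(h) = 0
    (hDh : 𝒞.comp h (DD 𝒞 d d h) = 0)   -- D(h) ∘ h = 0
    -- the new differential `d' = d + D(h)`:
    (d' : 𝒞.Hom O O) (hd' : d' = d + DD 𝒞 d d h) :
    -- `(O, d')` is again an object of `𝔠𝔵*(𝒞)` …
    (𝒞.comp d' d' + 𝒞.del d' = κ) ∧
    -- … and `1 + h : (O,d) → (O,d')` and `1 + h : (O,d') → (O,d)` are cycles …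
    (DD 𝒞 d d' (𝒞.id O + h) = 0) ∧
    (DD 𝒞 d' d (𝒞.id O + h) = 0) ∧
    -- … which are mutually inverse (chain isomorphisms):
    (𝒞.comp (𝒞.id O + h) (𝒞.id O + h) = 𝒞.id O) := by
  subst hd'
  let _ : Ring (𝒞.Hom O O) := 𝒞.endRing O
  have hδ : ∀ f g : 𝒞.Hom O O, 𝒞.delHom (f * g) = 𝒞.delHom f * g + f * 𝒞.delHom g :=
    𝒞.leibniz
  have hκ : curvature 𝒞.delHom d = κ := hobj
  have hcomm : Commute h (curvature 𝒞.delHom d) := hκ ▸ hκh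
  have hDDh := twistedDiff_self_twistedDiff_self_eq_zero hδ 𝒞.del_del 𝒞.char2 hcomm
  have hDhDh := twistedDiff_mul_twistedDiff_eq_zero hδ 𝒞.char2 hDDh hDh
  exact ⟨(curvature_add_twistedDiff hDDh hDhDh).trans hκ,
    twistedDiff_one_add_eq_zero_right hδ 𝒞.char2 hDh,
    twistedDiff_one_add_eq_zero_left hδ 𝒞.char2 hhD,
    one_add_mul_self_eq_one 𝒞.char2 hsq⟩

open Stmt4 in
theorem stmt4 (𝒞 : DGCat) (O : 𝒞.Obj) (d κ h : 𝒞.Hom O O)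
    -- `κ` is the fixed central value `*` of the category of complexes `𝔠𝔵*(𝒞)`:
    (hκd : 𝒞.comp d κ = 𝒞.comp κ d) (hκh : 𝒞.comp h κ = 𝒞.comp κ h)
    -- `(O, d)` is an object of `𝔠𝔵*(𝒞)`:
    (hobj : 𝒞.comp d d + 𝒞.del d = κ)
    -- the hypotheses on `h`:
    (hsq : 𝒞.comp h h = 0)
    (hhD : 𝒞.comp (DD 𝒞 d d h) h = 0)   -- h ∘ D(h) = 0
    (hDh : 𝒞.comp h (DD 𝒞 d d h) = 0)   -- D(h) ∘ h = 0
    -- the new differential `d' = d + D(h)`: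
    (d' : 𝒞.Hom O O) (hd' : d' = d + DD 𝒞 d d h) :
    -- `(O, d')` is again an object of `𝔠𝔵*(𝒞)` …
    (𝒞.comp d' d' + 𝒞.del d' = κ) ∧
    -- … and `1 + h : (O,d) → (O,d')` and `1 + h : (O,d') → (O,d)` are cycles …
    (DD 𝒞 d d' (𝒞.id O + h) = 0) ∧
    (DD 𝒞 d' d (𝒞.id O + h) = 0) ∧
    -- … which are mutually inverse (chain isomorphisms):
    (𝒞.comp (𝒞.id O + h) (𝒞.id O + h) = 𝒞.id O) :=
  stmt4_general 𝒞 O d κ h hκh hobj hsq hhD hDh d' hd'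
end

section
/- The one-colour skein relation for the tangle Alexander invariant: if T₊, T₋ and T₀ denote tangle diagrams identical except in a disc where they contain a positive crossing, a negative crossing and the oriented smoothing respectively, and both strands of the crossing carry the same colour t, then for every site s, ∇_{T₊}^s(t,t,…) − ∇_{T₋}^s(t,t,…) = (t − t⁻¹)·∇_{T₀}^s(t,t,…). -/
/-!
**Statement 7 (one-colour skein relation).** If `T₊`, `T₋` and `T₀` denote tangle
diagrams identical except in a disc where they contain a positive crossing, a negative
crossing and the oriented smoothing respectively, and both strands of the crossing
carry the same colour `t`, then for every site `s`,
`∇_{T₊}^s(t,t,…) − ∇_{T₋}^s(t,t,…) = (t − t⁻¹)·∇_{T₀}^s(t,t,…)`.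

Tangle diagrams are modelled combinatorially: a diagram has a finite set of crossings
`X`, a set of regions `R`, the four quadrant regions of each crossing (in the order
N, W, S, E, where N is the quadrant between the two outgoing strands), a sign for each
crossing, and an openness predicate on regions.  The invariant `∇^s` (with all colours
set equal to `t`, so with values in `ℤ[t^{±1}]`) is the Kauffman state sum of the paper
with the Alexander code specialised at `h = −1`:
positive crossing `(N,W,S,E) ↦ (t, 1, −t⁻¹, 1)`, negative `↦ (t⁻¹, 1, −t, 1)`.

The three diagrams share the outside data `(X₀, quad₀, pos₀)`; `T₊`/`T₋` have the
extra crossing with quadrants `N, W, S, E` (pairwise distinct regions, with `N` and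
`S` closed), and the oriented smoothing `T₀` has regions `R₀ = R/(N ∼ S)`, realised
by the identification map `π`.  Sites of `T₊`, `T₋`, `T₀` correspond via `π`.
-/

namespace Stmt7

/-- `ℤ[t^{±1}]` -/
abbrev L := AddMonoidAlgebra ℤ ℤ

/-- the monomial `t^k` -/
noncomputable def T (k : ℤ) : L := AddMonoidAlgebra.single k 1

/-- a combinatorial model of a tangle diagram (with all strands of one colour):
the quadrants at a crossing are numbered `0 = N` (between the two outgoing strands),
`1 = W`, `2 = S`, `3 = E` (anticlockwise). -/
structure Diagram where
  X : Type
  R : Type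
  [finX : Fintype X]
  [deqX : DecidableEq X]
  quad : X → Fin 4 → R
  pos : X → Bool
  opn : R → Prop

attribute [instance] Diagram.finX Diagram.deqX

/-- the Alexander code of a one-colour crossing, with `h = −1` substituted -/
noncomputable def label (b : Bool) : Fin 4 → L :=
  if b then ![T 1, 1, -T (-1), 1] else ![T (-1), 1, -T 1, 1]

/-- a generalised Kauffman state: each closed region is occupied by exactly one
marker, each open region by at most one -/
def IsState (D : Diagram) (mk : D.X → Fin 4) : Prop :=
  (∀ r : D.R, ¬ D.opn r → ∃! x : D.X, D.quad x (mk x) = r) ∧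
  (∀ r : D.R, D.opn r → ∀ x y : D.X, D.quad x (mk x) = r → D.quad y (mk y) = r → x = y)

/-- the site of a state: the set of occupied open regions -/
def siteOf (D : Diagram) (mk : D.X → Fin 4) : Set D.R :=
  {r | D.opn r ∧ ∃ x : D.X, D.quad x (mk x) = r}

/-- the Kauffman state sum `∇_D^s` -/
noncomputable def nabla (D : Diagram) (s : Set D.R) : L :=
  ∑ mk : D.X → Fin 4,
    @ite _ (IsState D mk ∧ siteOf D mk = s) (Classical.propDecidable _)
      (∏ x : D.X, label (D.pos x) (mk x)) 0

/-- the diagram `T₊` (for `b = true`) or `T₋` (for `b = false`): the outside diagram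
`(X₀, quad₀, pos₀)` together with one extra crossing with quadrants `N, W, S, E` -/
noncomputable def crossDiag (X₀ Reg : Type) [Fintype X₀] [DecidableEq X₀]
    (quad₀ : X₀ → Fin 4 → Reg) (pos₀ : X₀ → Bool) (opn : Reg → Prop)
    (N W S E : Reg) (b : Bool) : Diagram where
  X := Option X₀
  R := Reg
  quad := fun o => o.elim ![N, W, S, E] quad₀
  pos := fun o => o.elim b pos₀
  opn := opn

/-- the diagram `T₀`: the oriented smoothing, whose regions are those of `T±` with
`N` and `S` identified along `π` -/
noncomputable def smoothDiag (X₀ Reg Reg₀ : Type) [Fintype X₀] [DecidableEq X₀]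
    (π : Reg → Reg₀) (quad₀ : X₀ → Fin 4 → Reg) (pos₀ : X₀ → Bool)
    (opn : Reg → Prop) : Diagram where
  X := X₀
  R := Reg₀
  quad := fun x i => π (quad₀ x i)
  pos := pos₀
  opn := fun r₀ => ∃ r, π r = r₀ ∧ opn r

end Stmt7

/-!
Split each state of `T₊`/`T₋` according to the quadrant holding the marker of the distinguished
crossing. In `W` and `E` the labels of `T₊` and `T₋` agree, so these states cancel; in `N` and
`S` they differ by `t - t⁻¹`. A state with that marker in `N` is the same thing as a state of `T₀`
in which no other marker lies in `N`, since `π` is a bijection from the regions other than `N`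
onto those of `T₀`; likewise for `S`. Every state of `T₀` has the marker of the closed merged
region in exactly one of `N` and `S`, so the two families together give each state of `T₀` once.
-/

namespace Stmt7

open Function Set

section StateMap

variable {X R : Type}

/-- `f` sends each crossing to the region holding its marker; these markers form a generalised
Kauffman state with site `s`. -/
def IsStateMap (opn : R → Prop) (s : Set R) (f : X → R) : Prop :=
  Injective f ∧ (∀ r, ¬ opn r → r ∈ range f) ∧ {r | opn r} ∩ range f = s

theorem isState_iff (D : Diagram) (mk : D.X → Fin 4) :
    IsState D mk ↔ Injective (fun x => D.quad x (mk x)) ∧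
      ∀ r, ¬ D.opn r → r ∈ range (fun x => D.quad x (mk x)) := by
  refine ⟨fun ⟨hclosed, hopen⟩ => ⟨fun x y hxy => ?_, fun r hr => (hclosed r hr).exists⟩, ?_⟩
  · by_cases hx : D.opn (D.quad x (mk x))
    · exact hopen _ hx x y rfl hxy.symm
    · exact (hclosed _ hx).unique rfl hxy.symm
  · rintro ⟨hinj, hcov⟩
    exact ⟨fun r hr => (hcov r hr).elim fun x hx => ⟨x, hx, fun y hy => hinj (hy.trans hx.symm)⟩,
      fun r _ x y hx hy => hinj (hx.trans hy.symm)⟩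

theorem isState_and_siteOf_eq_iff (D : Diagram) (mk : D.X → Fin 4) (s : Set D.R) :
    IsState D mk ∧ siteOf D mk = s ↔ IsStateMap D.opn s (fun x => D.quad x (mk x)) := by
  rw [isState_iff, and_assoc]
  rfl

open scoped Classical in
theorem nabla_eq_sum_isStateMap (D : Diagram) (s : Set D.R) :
    nabla D s = ∑ mk : D.X → Fin 4,
      if IsStateMap D.opn s (fun x => D.quad x (mk x)) then ∏ x, label (D.pos x) (mk x) else 0 := by
  simp only [nabla, isState_and_siteOf_eq_iff]

end StateMap

section Transport

variable {X α β : Type} {π : α → β} {opn : α → Prop} {C : α}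

theorem opn_subset_compl (hC : ¬ opn C) : {a | opn a} ⊆ {C}ᶜ :=
  fun _ ha hEq => hC (hEq ▸ ha)

theorem exists_eq_and_opn_iff (hinj : InjOn π {C}ᶜ) (hC : ¬ opn C) {a : α} (ha : a ≠ C) :
    (∃ a', π a' = π a ∧ opn a') ↔ opn a :=
  ⟨fun ⟨_, ha', ho⟩ => hinj (opn_subset_compl hC ho) ha ha' ▸ ho, fun h => ⟨a, rfl, h⟩⟩

variable {f : X → α}

theorem forall_not_opn_mem_insert_range_iff (hbij : BijOn π {C}ᶜ univ) (hC : ¬ opn C)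
    (hf : C ∉ range f) :
    (∀ a, ¬ opn a → a ∈ insert C (range f)) ↔
      ∀ b, ¬ (∃ a, π a = b ∧ opn a) → b ∈ range (π ∘ f) := by
  refine ⟨fun hcov b hb => ?_, fun hcov a ha => ?_⟩
  · obtain ⟨a, haC, rfl⟩ := hbij.surjOn (mem_univ b)
    obtain hEq | ⟨x, rfl⟩ := hcov a fun h => hb ⟨a, rfl, h⟩
    · exact absurd hEq haC
    · exact mem_range_self x
  · by_cases haC : a = C
    · exact .inl haC
    obtain ⟨x, hx⟩ := hcov (π a) ((exists_eq_and_opn_iff hbij.injOn hC haC).not.mpr ha)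
    exact .inr ⟨x, hbij.injOn (fun h => hf ⟨x, h⟩) haC hx⟩

theorem inter_insert_range_eq_iff (hinj : InjOn π {C}ᶜ) (hC : ¬ opn C) (hf : C ∉ range f)
    {s : Set α} (hs : ∀ r ∈ s, opn r) :
    {a | opn a} ∩ insert C (range f) = s ↔
      {b | ∃ a, π a = b ∧ opn a} ∩ range (π ∘ f) = π '' s := by
  have himage : {b | ∃ a, π a = b ∧ opn a} = π '' {a | opn a} := by
    ext b; exact exists_congr fun a => and_comm
  rw [inter_insert_of_notMem (s := {a | opn a}) hC, himage, range_comp,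
    ← hinj.image_inter (opn_subset_compl hC) (subset_compl_singleton_iff.mpr hf),
    hinj.image_eq_image_iff (inter_subset_left.trans (opn_subset_compl hC))
      fun r hr => opn_subset_compl hC (hs r hr)]

theorem isStateMap_optionElim_iff (hbij : BijOn π {C}ᶜ univ) (hC : ¬ opn C) {s : Set α}
    (hs : ∀ r ∈ s, opn r) (f : X → α) :
    IsStateMap opn s (fun o : Option X => o.elim C f) ↔
      IsStateMap (fun b => ∃ a, π a = b ∧ opn a) (π '' s) (π ∘ f) ∧ C ∉ range f := by
  by_cases hf : C ∈ range f
  · simp only [hf, not_true_eq_false, and_false, iff_false]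
    exact fun h => (Option.injective_iff.mp h.1).2 hf
  have hinj : Injective (fun o : Option X => o.elim C f) ↔ Injective f :=
    Option.injective_iff.trans (and_iff_left hf)
  simp only [IsStateMap, hinj, Option.range_elim, hf, not_false_eq_true, and_true,
    forall_not_opn_mem_insert_range_iff hbij hC hf, inter_insert_range_eq_iff hbij.injOn hC hf hs,
    hbij.injOn.injective_iff _ (subset_compl_singleton_iff.mpr hf)]

end Transport

section Merge

variable {X α β : Type} {π : α → β} {opn : α → Prop} {N S : α}

theorem bijOn_compl_of_merge (hsurj : Surjective π) (hNS : N ≠ S) (hπNS : π N = π S)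
    (hinj : ∀ r r', π r = π r' → r = r' ∨ (r = N ∧ r' = S) ∨ (r = S ∧ r' = N)) :
    BijOn π {N}ᶜ univ := by
  refine ⟨mapsTo_univ _ _, fun r hr r' hr' h => ?_, fun b _ => ?_⟩
  · rcases hinj r r' h with h | ⟨h, -⟩ | ⟨-, h⟩
    exacts [h, absurd h hr, absurd h hr']
  · obtain ⟨r, rfl⟩ := hsurj b
    by_cases hr : r = N
    · exact ⟨S, hNS.symm, hr ▸ hπNS.symm⟩
    · exact ⟨r, hr, rfl⟩

theorem notMem_range_iff_mem_range (hNS : N ≠ S) (hπNS : π N = π S)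
    (hinj : ∀ r r', π r = π r' → r = r' ∨ (r = N ∧ r' = S) ∨ (r = S ∧ r' = N))
    (hNc : ¬ opn N) (hSc : ¬ opn S) {s₀ : Set β} {f : X → α}
    (h : IsStateMap (fun b => ∃ a, π a = b ∧ opn a) s₀ (π ∘ f)) :
    S ∉ range f ↔ N ∈ range f := by
  have hfibre : ∀ a, π a = π N → a = N ∨ a = S := fun a ha => by
    rcases hinj a N ha with h | ⟨h, -⟩ | ⟨h, -⟩ <;> simp [h]
  refine ⟨fun hS => ?_, fun ⟨x, hx⟩ ⟨y, hy⟩ => hNS ?_⟩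
  · obtain ⟨x, hx⟩ := h.2.1 (π N) fun ⟨a, ha, ho⟩ => by
      rcases hfibre a ha with rfl | rfl <;> contradiction
    rcases hfibre _ hx with hN | hS'
    exacts [⟨x, hN⟩, absurd ⟨x, hS'⟩ hS]
  · rw [← hx, ← hy, h.1 (show π (f x) = π (f y) by simp [hx, hy, hπNS])]

end Merge

theorem ite_add_ite_eq_ite {M : Type} [AddMonoid M] {P₀ P₂ Q A : Prop} [Decidable P₀]
    [Decidable P₂] [Decidable Q] (h₀ : P₀ ↔ Q ∧ ¬ A) (h₂ : P₂ ↔ Q ∧ A) (c : M) :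
    ((if P₀ then c else 0) + if P₂ then c else 0) = if Q then c else 0 := by
  by_cases hQ : Q <;> by_cases hA : A <;> simp [h₀, h₂, hQ, hA]

theorem sum_label_sub_label (P : Fin 4 → Prop) [DecidablePred P] (c : L) :
    ∑ i, ((if P i then label true i * c else 0) - if P i then label false i * c else 0) =
      (T 1 - T (-1)) * ((if P 0 then c else 0) + if P 2 then c else 0) := by
  simp only [Fin.sum_univ_four, label, if_true, Bool.false_eq_true, if_false, Matrix.cons_val]
  split_ifs <;> ring

section Crossing

variable {X₀ Reg Reg₀ : Type} [Fintype X₀] [DecidableEq X₀]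
  (quad₀ : X₀ → Fin 4 → Reg) (pos₀ : X₀ → Bool) (opn : Reg → Prop) (N W S E : Reg)

open scoped Classical in
theorem nabla_crossDiag (s : Set Reg) (b : Bool) :
    nabla (crossDiag X₀ Reg quad₀ pos₀ opn N W S E b) s =
      ∑ m : X₀ → Fin 4, ∑ i : Fin 4,
        if IsStateMap opn s (fun o : Option X₀ => o.elim (![N, W, S, E] i) fun x => quad₀ x (m x))
        then label b i * ∏ x, label (pos₀ x) (m x) else 0 := by
  refine (nabla_eq_sum_isStateMap (crossDiag X₀ Reg quad₀ pos₀ opn N W S E b) s).trans ?_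
  change (∑ mk : Option X₀ → Fin 4,
    if IsStateMap opn s (fun o : Option X₀ => o.elim ![N, W, S, E] quad₀ (mk o))
    then ∏ o : Option X₀, label (o.elim b pos₀) (mk o) else 0) = _
  rw [Finset.sum_comm, ← Fintype.sum_prod_type']
  refine Fintype.sum_equiv Equiv.piOptionEquivProd _ _ fun mk => ?_
  have hmarkers : (fun o : Option X₀ => o.elim ![N, W, S, E] quad₀ (mk o)) =
      fun o => o.elim (![N, W, S, E] (mk none)) fun x => quad₀ x (mk (some x)) := by
    funext o; cases o <;> rfl
  simp only [hmarkers, Fintype.prod_option]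
  rfl

open scoped Classical in
theorem nabla_smoothDiag (π : Reg → Reg₀) (s : Set Reg) :
    nabla (smoothDiag X₀ Reg Reg₀ π quad₀ pos₀ opn) (π '' s) =
      ∑ m : X₀ → Fin 4,
        if IsStateMap (fun b => ∃ a, π a = b ∧ opn a) (π '' s) (π ∘ fun x => quad₀ x (m x))
        then ∏ x, label (pos₀ x) (m x) else 0 :=
  nabla_eq_sum_isStateMap _ _

end Crossing

end Stmt7

open Stmt7 in
theorem stmt7_general
    (X₀ Reg Reg₀ : Type) [Fintype X₀] [DecidableEq X₀]
    (quad₀ : X₀ → Fin 4 → Reg) (pos₀ : X₀ → Bool) (opn : Reg → Prop)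
    -- the quadrants of the distinguished crossing:
    (N W S E : Reg)
    (hNS : N ≠ S)
    (hNc : ¬ opn N) (hSc : ¬ opn S)
    -- the oriented smoothing merges exactly the regions N and S:
    (π : Reg → Reg₀) (hπsurj : Function.Surjective π) (hπNS : π N = π S)
    (hπinj : ∀ r r' : Reg, π r = π r' →
      r = r' ∨ (r = N ∧ r' = S) ∨ (r = S ∧ r' = N))
    -- a site:
    (s : Set Reg) (hs : ∀ r ∈ s, opn r) :
    nabla (crossDiag X₀ Reg quad₀ pos₀ opn N W S E true) s
      - nabla (crossDiag X₀ Reg quad₀ pos₀ opn N W S E false) s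
      = (T 1 - T (-1)) * nabla (smoothDiag X₀ Reg Reg₀ π quad₀ pos₀ opn) (π '' s) := by
  have hbijN := bijOn_compl_of_merge hπsurj hNS hπNS hπinj
  have hbijS := bijOn_compl_of_merge hπsurj hNS.symm hπNS.symm fun r r' h =>
    (hπinj r r' h).imp_right Or.symm
  rw [nabla_crossDiag, nabla_crossDiag, nabla_smoothDiag, ← Finset.sum_sub_distrib,
    Finset.mul_sum]
  refine Finset.sum_congr rfl fun m _ => ?_
  rw [← Finset.sum_sub_distrib, sum_label_sub_label]
  congr 1
  classical
  refine ite_add_ite_eq_ite (isStateMap_optionElim_iff hbijN hNc hs _)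
    ((isStateMap_optionElim_iff hbijS hSc hs _).trans (and_congr_right fun h => ?_)) _
  exact notMem_range_iff_mem_range hNS hπNS hπinj hNc hSc h

open Stmt7 in
theorem stmt7
    (X₀ Reg Reg₀ : Type) [Fintype X₀] [DecidableEq X₀]
    (quad₀ : X₀ → Fin 4 → Reg) (pos₀ : X₀ → Bool) (opn : Reg → Prop)
    -- the quadrants of the distinguished crossing:
    (N W S E : Reg)
    (hNW : N ≠ W) (hNS : N ≠ S) (hNE : N ≠ E) (hWS : W ≠ S) (hWE : W ≠ E) (hSE : S ≠ E)
    (hNc : ¬ opn N) (hSc : ¬ opn S)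
    -- the oriented smoothing merges exactly the regions N and S:
    (π : Reg → Reg₀) (hπsurj : Function.Surjective π) (hπNS : π N = π S)
    (hπinj : ∀ r r' : Reg, π r = π r' →
      r = r' ∨ (r = N ∧ r' = S) ∨ (r = S ∧ r' = N))
    -- a site:
    (s : Set Reg) (hs : ∀ r ∈ s, opn r) :
    nabla (crossDiag X₀ Reg quad₀ pos₀ opn N W S E true) s
      - nabla (crossDiag X₀ Reg quad₀ pos₀ opn N W S E false) s
      = (T 1 - T (-1)) * nabla (smoothDiag X₀ Reg Reg₀ π quad₀ pos₀ opn) (π '' s) :=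
  stmt7_general X₀ Reg Reg₀ quad₀ pos₀ opn N W S E hNS hNc hSc π hπsurj hπNS hπinj s hs
end
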